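/- arXiv:1709.01590 — 5 statements merged into one kernel-verified Lean document; each statement's English description precedes it below -/
import Mathlib

section
/- If G is a graph on n vertices with minimum degree δ(G) = n/2 + 1 (so n is even), then the edge clique cover number satisfies θ_e(G) ≤ n²/4 − n + 2. -/
/-- A set of cliques `𝒞` is an edge clique cover of `G` if every clique in `𝒞` is a clique
of `G` and every edge of `G` is contained in some member of `𝒞`. -/
def IsEdgeCliqueCover {V : Type*} (G : SimpleGraph V) (𝒞 : Finset (Finset V)) : Prop :=
  (∀ K ∈ 𝒞, G.IsClique (K : Set V)) ∧ ∀ u v : V, G.Adj u v → ∃ K ∈ 𝒞, u ∈ K ∧ v ∈ K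

/-- The edge clique cover number `θ_e(G)`: the minimum number of cliques needed to cover
all edges of `G`. -/
noncomputable def edgeCliqueCoverNumber {V : Type*} (G : SimpleGraph V) : ℕ :=
  sInf {m : ℕ | ∃ 𝒞 : Finset (Finset V), IsEdgeCliqueCover G 𝒞 ∧ 𝒞.card = m}

/-!
The complement of `G` has maximum degree `n - 1 - δ = m - 1`, where `n = 2m + 2`, so it is
greedily `m`-colourable: the colour classes `P₁, …, Pₘ` are cliques of `G` partitioning its
vertices. Edges inside a class are covered by the class itself, and the edges between `Pᵢ` and
`Pⱼ` by the `min |Pᵢ| |Pⱼ|` cliques `{a} ∪ (N(a) ∩ Pⱼ)`, with `a` ranging over the smaller class.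
Hence `θ_e(G) ≤ m + ∑_{i<j} min |Pᵢ| |Pⱼ|`. Writing `|Pᵢ| = 2 + dᵢ` with `∑ dᵢ = 2`, the integer
inequality `∑_{i,j} min dᵢ dⱼ ≤ (∑ dᵢ)²` bounds the sum by `m² - m + 1`, so
`θ_e(G) ≤ m² + 1 = n²/4 - n + 2`.
-/

open Finset

theorem sum_sum_eq_sum_add_two_nsmul_sum_lt {ι M : Type*} [Fintype ι] [LinearOrder ι]
    [AddCommMonoid M] (f : ι → ι → M) (hf : ∀ i j, f i j = f j i) :
    ∑ i, ∑ j, f i j = ∑ i, f i i + 2 • ∑ i, ∑ j with i < j, f i j := by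
  have hsplit : ∀ i j, f i j = (if i = j then f i j else 0) + (if i < j then f i j else 0) +
      (if j < i then f j i else 0) := by
    intro i j
    rcases lt_trichotomy i j with h | rfl | h
    · simp [h, h.ne, h.not_gt]
    · simp
    · simp [h, h.ne', h.not_gt, hf i j]
  simp_rw [sum_filter]
  rw [sum_congr rfl fun i _ => sum_congr rfl fun j _ => hsplit i j]
  simp only [sum_add_distrib, sum_ite_eq, mem_univ, if_true, two_nsmul, add_assoc]
  rw [sum_comm (f := fun i j => if j < i then f j i else 0)]

theorem sum_sum_min_le_sq_sum {ι : Type*} [Fintype ι] (d : ι → ℤ) :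
    ∑ i, ∑ j, min (d i) (d j) ≤ (∑ i, d i) ^ 2 := by
  classical
  set S := ∑ i, d i
  set P := univ.filter fun i => 0 < d i
  -- Integrality enters only here: the lemma fails for real-valued `d`.
  have hP : (#P : ℤ) ≤ ∑ i ∈ P, d i := by
    simpa using card_nsmul_le_sum P d 1 fun i hi => (mem_filter.1 hi).2
  have hpoint : ∀ i j, min (d i) (d j) ≤ if 0 < d i then d j else if 0 < d j then d i else 0 := by
    intro i j; split_ifs <;> omega
  have hrow : ∀ i, ∑ j, (if 0 < d i then d j else if 0 < d j then d i else 0)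
      = if 0 < d i then S else #P * d i := by
    intro i; split_ifs
    · rfl
    · rw [← sum_filter, sum_const, nsmul_eq_mul]
  have hsplit : ∑ i ∈ P, d i + ∑ i ∈ univ.filter (fun i => ¬ 0 < d i), d i = S :=
    sum_filter_add_sum_filter_not _ _ _
  calc ∑ i, ∑ j, min (d i) (d j)
      ≤ ∑ i, ∑ j, (if 0 < d i then d j else if 0 < d j then d i else 0) :=
        sum_le_sum fun i _ => sum_le_sum fun j _ => hpoint i j
    _ = #P * S + #P * (S - ∑ i ∈ P, d i) := by
        rw [sum_congr rfl fun i _ => hrow i, sum_ite, sum_const, nsmul_eq_mul, ← mul_sum,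
          ← hsplit]
        ring
    _ ≤ S ^ 2 := by
        nlinarith [sq_nonneg (S - #P), mul_le_mul_of_nonneg_left hP (Nat.cast_nonneg (α := ℤ) #P)]

theorem card_add_sum_min_le_sq_add_one {ι : Type*} [Fintype ι] [LinearOrder ι] (s : ι → ℕ)
    (hs : ∑ i, s i = 2 * Fintype.card ι + 2) :
    Fintype.card ι + ∑ i, ∑ j with i < j, min (s i) (s j) ≤ Fintype.card ι ^ 2 + 1 := by
  have hpairs := sum_sum_eq_sum_add_two_nsmul_sum_lt (fun i j => min (s i) (s j))
    fun i j => min_comm _ _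
  simp only [min_self, hs, smul_eq_mul] at hpairs
  have hmin := sum_sum_min_le_sq_sum fun i => (s i : ℤ) - 2
  have hshift : ∀ i j, min ((s i : ℤ) - 2) ((s j : ℤ) - 2) = (min (s i) (s j) : ℕ) - 2 := by
    intro i j; push_cast; exact min_sub_sub_right _ _ _
  simp only [hshift, sum_sub_distrib, sum_const, card_univ, nsmul_eq_mul, ← Nat.cast_sum, hs,
    hpairs] at hmin
  push_cast at hmin
  nlinarith

theorem edgeCliqueCoverNumber_le_card {V : Type*} {G : SimpleGraph V} {𝒞 : Finset (Finset V)}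
    (h : IsEdgeCliqueCover G 𝒞) : edgeCliqueCoverNumber G ≤ #𝒞 :=
  Nat.sInf_le ⟨𝒞, h, rfl⟩

namespace SimpleGraph

theorem colorable_of_forall_degree_lt {V : Type*} [Fintype V] [DecidableEq V]
    (H : SimpleGraph V) [DecidableRel H.Adj] {m : ℕ} (h : ∀ v, H.degree v < m) :
    H.Colorable m := by
  suffices ∀ s : Finset V, ∃ C : V → Fin m, ∀ u ∈ s, ∀ v ∈ s, H.Adj u v → C u ≠ C v by
    obtain ⟨C, hC⟩ := this univ
    exact ⟨Coloring.mk C fun huv => hC _ (mem_univ _) _ (mem_univ _) huv⟩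
  intro s
  induction s using Finset.induction_on with
  | empty => exact ⟨fun v => ⟨0, (Nat.zero_le _).trans_lt (h v)⟩, by simp⟩
  | insert a s ha ih =>
    obtain ⟨C, hC⟩ := ih
    obtain ⟨c, -, hc⟩ : ∃ c ∈ univ, c ∉ (H.neighborFinset a).image C :=
      exists_mem_notMem_of_card_lt_card <| by
        simpa using card_image_le.trans_lt (h a)
    have hfree : ∀ v, H.Adj a v → C v ≠ c := fun v hav hvc =>
      hc (mem_image.2 ⟨v, (mem_neighborFinset _ _ _).2 hav, hvc⟩)
    refine ⟨Function.update C a c, ?_⟩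
    intro u hu v hv huv
    rcases mem_insert.1 hu with rfl | hu <;> rcases mem_insert.1 hv with rfl | hv
    · exact absurd huv H.irrefl
    · simpa [Function.update, H.ne_of_adj huv |>.symm] using (hfree v huv).symm
    · simpa [Function.update, H.ne_of_adj huv] using hfree u huv.symm
    · simpa [Function.update, ne_of_mem_of_not_mem hu ha, ne_of_mem_of_not_mem hv ha] using
        hC u hu v hv huv

theorem isClique_filter_compl_coloring_eq {V α : Type*} [Fintype V] [DecidableEq α]
    {G : SimpleGraph V} (C : Gᶜ.Coloring α) (c : α) :
    G.IsClique ({v | C v = c} : Finset V) := by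
  intro u hu v hv huv
  by_contra hadj
  simp only [coe_filter, mem_univ, true_and, Set.mem_ofPred_eq] at hu hv
  exact C.valid ((G.compl_adj u v).2 ⟨huv, hadj⟩) (hu.trans hv.symm)

variable {V : Type*} [DecidableEq V] (G : SimpleGraph V) [DecidableRel G.Adj]

def starCliques (A B : Finset V) : Finset (Finset V) :=
  A.image fun a => insert a (B.filter (G.Adj a))

def crossCliques (A B : Finset V) : Finset (Finset V) :=
  if #A ≤ #B then G.starCliques A B else G.starCliques B A

variable {G} {A B K : Finset V} {a b : V}

theorem card_starCliques_le : #(G.starCliques A B) ≤ #A := card_image_le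

theorem isClique_of_mem_starCliques (hB : G.IsClique (B : Set V)) (hK : K ∈ G.starCliques A B) :
    G.IsClique (K : Set V) := by
  obtain ⟨a, -, rfl⟩ := mem_image.1 hK
  rw [coe_insert, coe_filter]
  exact (hB.subset fun _ hb => hb.1).insert fun _ hb _ => hb.2

theorem exists_mem_starCliques_of_adj (ha : a ∈ A) (hb : b ∈ B) (hab : G.Adj a b) :
    ∃ K ∈ G.starCliques A B, a ∈ K ∧ b ∈ K :=
  ⟨_, mem_image_of_mem _ ha, mem_insert_self _ _, mem_insert_of_mem (mem_filter.2 ⟨hb, hab⟩)⟩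

theorem card_crossCliques_le : #(G.crossCliques A B) ≤ min #A #B := by
  unfold crossCliques
  split_ifs with h
  · exact card_starCliques_le.trans (le_min le_rfl h)
  · exact card_starCliques_le.trans (le_min (not_le.1 h).le le_rfl)

theorem isClique_of_mem_crossCliques (hA : G.IsClique (A : Set V)) (hB : G.IsClique (B : Set V))
    (hK : K ∈ G.crossCliques A B) : G.IsClique (K : Set V) := by
  unfold crossCliques at hK
  split_ifs at hK
  exacts [isClique_of_mem_starCliques hB hK, isClique_of_mem_starCliques hA hK]

theorem exists_mem_crossCliques_of_adj (ha : a ∈ A) (hb : b ∈ B) (hab : G.Adj a b) :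
    ∃ K ∈ G.crossCliques A B, a ∈ K ∧ b ∈ K := by
  unfold crossCliques
  split_ifs
  · exact exists_mem_starCliques_of_adj ha hb hab
  · obtain ⟨K, hK, hbK, haK⟩ := exists_mem_starCliques_of_adj hb ha hab.symm
    exact ⟨K, hK, haK, hbK⟩

theorem edgeCliqueCoverNumber_le_card_add_sum_min {ι : Type*} [Fintype ι] [LinearOrder ι]
    (P : ι → Finset V) (hP : ∀ i, G.IsClique (P i : Set V)) (hcov : ∀ v, ∃ i, v ∈ P i) :
    edgeCliqueCoverNumber G ≤ Fintype.card ι + ∑ i, ∑ j with i < j, min #(P i) #(P j) := by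
  let cross : Finset (Finset V) :=
    univ.biUnion fun i => (univ.filter (i < ·)).biUnion fun j => G.crossCliques (P i) (P j)
  have hcross_card : #cross ≤ ∑ i, ∑ j with i < j, min #(P i) #(P j) :=
    card_biUnion_le.trans <| sum_le_sum fun i _ =>
      card_biUnion_le.trans <| sum_le_sum fun j _ => card_crossCliques_le
  have hcover : IsEdgeCliqueCover G (univ.image P ∪ cross) := by
    refine ⟨fun K hK => ?_, fun u v huv => ?_⟩
    · rcases mem_union.1 hK with hK | hK
      · obtain ⟨i, -, rfl⟩ := mem_image.1 hK
        exact hP i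
      · simp only [cross, mem_biUnion, mem_filter, mem_univ, true_and] at hK
        obtain ⟨i, j, -, hK⟩ := hK
        exact isClique_of_mem_crossCliques (hP i) (hP j) hK
    obtain ⟨i, hu⟩ := hcov u
    obtain ⟨j, hv⟩ := hcov v
    have hcross_mem : ∀ {i j}, i < j → ∀ {K}, K ∈ G.crossCliques (P i) (P j) →
        K ∈ univ.image P ∪ cross := fun hij K hK =>
      mem_union_right _ <| mem_biUnion.2 ⟨_, mem_univ _, mem_biUnion.2 ⟨_, by simpa using hij, hK⟩⟩
    rcases lt_trichotomy i j with hij | rfl | hji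
    · obtain ⟨K, hK, huK, hvK⟩ := exists_mem_crossCliques_of_adj hu hv huv
      exact ⟨K, hcross_mem hij hK, huK, hvK⟩
    · exact ⟨P i, mem_union_left _ (mem_image_of_mem _ (mem_univ _)), hu, hv⟩
    · obtain ⟨K, hK, hvK, huK⟩ := exists_mem_crossCliques_of_adj hv hu huv.symm
      exact ⟨K, hcross_mem hji hK, huK, hvK⟩
  calc edgeCliqueCoverNumber G ≤ #(univ.image P ∪ cross) := edgeCliqueCoverNumber_le_card hcover
    _ ≤ #(univ.image P) + #cross := card_union_le _ _
    _ ≤ Fintype.card ι + ∑ i, ∑ j with i < j, min #(P i) #(P j) :=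
        add_le_add (card_image_le.trans_eq card_univ) hcross_card

theorem edgeCliqueCoverNumber_le_sq_add_one [Fintype V] {m : ℕ} (C : Gᶜ.Coloring (Fin m))
    (hV : Fintype.card V = 2 * m + 2) : edgeCliqueCoverNumber G ≤ m ^ 2 + 1 := by
  let P : Fin m → Finset V := fun c => {v | C v = c}
  have hsum : ∑ c, #(P c) = 2 * Fintype.card (Fin m) + 2 := by
    rw [Fintype.card_fin, ← hV, ← card_univ, card_eq_sum_card_fiberwise fun v _ => mem_univ (C v)]
  calc edgeCliqueCoverNumber G
      ≤ Fintype.card (Fin m) + ∑ i, ∑ j with i < j, min #(P i) #(P j) :=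
        edgeCliqueCoverNumber_le_card_add_sum_min P (isClique_filter_compl_coloring_eq C)
          fun v => ⟨C v, by simp [P]⟩
    _ ≤ Fintype.card (Fin m) ^ 2 + 1 := card_add_sum_min_le_sq_add_one _ hsum
    _ = m ^ 2 + 1 := by rw [Fintype.card_fin]

end SimpleGraph

/-- If `G` is a graph on `n` vertices with minimum degree `δ(G) = n/2 + 1` (so `n` is even),
then `θ_e(G) ≤ n²/4 − n + 2`. -/
theorem edgeCliqueCoverNumber_le_of_minDegree_eq_half_plus_one {V : Type*} [Fintype V]
    [DecidableEq V] (G : SimpleGraph V) [DecidableRel G.Adj]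
    (h : 2 * G.minDegree = Fintype.card V + 2) :
    (edgeCliqueCoverNumber G : ℝ) ≤
      (Fintype.card V : ℝ) ^ 2 / 4 - (Fintype.card V : ℝ) + 2 := by
  have : Nonempty V := by
    by_contra hV
    rw [not_nonempty_iff] at hV
    have := G.minDegree_of_subsingleton
    omega
  have hδ := G.minDegree_lt_card
  obtain ⟨m, hm⟩ : ∃ m, G.minDegree = m + 2 := ⟨G.minDegree - 2, by omega⟩
  have hV : Fintype.card V = 2 * m + 2 := by omega
  have hcompl : ∀ v, Gᶜ.degree v < m := fun v => by
    have := G.minDegree_le_degree v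
    rw [G.degree_compl]
    omega
  obtain ⟨C⟩ := Gᶜ.colorable_of_forall_degree_lt hcompl
  have hθ : (edgeCliqueCoverNumber G : ℝ) ≤ m ^ 2 + 1 := by
    exact_mod_cast SimpleGraph.edgeCliqueCoverNumber_le_sq_add_one C hV
  rw [hV]
  push_cast
  linarith
end

section
/- For every graph G on n vertices, the triangle clique cover number satisfies θ_△(G) ≤ k_3(T(n,3)), the number of triangles in the Turán graph T(n,3). -/
/-- A set of cliques `𝒞` is a triangle clique cover of `G` if every member of `𝒞` is a
clique of `G` and every triangle (3-clique) of `G` is contained in some member of `𝒞`. -/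
def IsTriangleCliqueCover {V : Type*} (G : SimpleGraph V) (𝒞 : Finset (Finset V)) : Prop :=
  (∀ K ∈ 𝒞, G.IsClique (K : Set V)) ∧ ∀ T : Finset V, G.IsNClique 3 T → ∃ K ∈ 𝒞, T ⊆ K

/-- The triangle clique cover number `θ_△(G)`: the minimum number of cliques needed to
cover all triangles of `G`. -/
noncomputable def triangleCliqueCoverNumber {V : Type*} (G : SimpleGraph V) : ℕ :=
  sInf {m : ℕ | ∃ 𝒞 : Finset (Finset V), IsTriangleCliqueCover G 𝒞 ∧ 𝒞.card = m}

/-- `k₃(T(n,3))`: the number of triangles (3-cliques) of the Turán graph `T(n,3)`. -/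
def k3Turan (n : ℕ) : ℕ := ((SimpleGraph.turanGraph n 3).cliqueFinset 3).card

/-!
If `G` has a triangle, take a maximum clique `Q`, of size `q ≥ 3`, and cover the triangles of
`G - Q` by induction. Every other triangle `T` meets `Q`, so `P = T \ Q` is a clique with at most
two vertices, and `T` lies in the clique formed by `P` and its common neighbours in `Q`. There are
at most `1 + |G - Q| + e(G - Q)` such `P`, and since `G - Q` has no `(q+1)`-clique, Turán's theorem
gives `2q · e(G - Q) ≤ (q - 1) |G - Q|²`. Finally, `k₃(T(n,3))` is the product of the three part
sizes of `T(n,3)`, and that product grows fast enough to absorb the count above.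
-/

open Finset SimpleGraph

def turanPartProd (n : ℕ) : ℕ := (n + 2) / 3 * ((n + 1) / 3) * (n / 3)

lemma exists_turanPartProd_eq (n : ℕ) : ∃ a b c, turanPartProd n = a * b * c ∧
    turanPartProd (n + 3) = (a + 1) * (b + 1) * (c + 1) ∧ a + b + c = n ∧
    (a = c ∧ b = c ∨ a = c + 1 ∧ b = c ∨ a = c + 1 ∧ b = c + 1) := by
  refine ⟨(n + 2) / 3, (n + 1) / 3, n / 3, rfl, ?_, by omega, by omega⟩
  rw [turanPartProd, show (n + 3 + 2) / 3 = (n + 2) / 3 + 1 by omega,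
    show (n + 3 + 1) / 3 = (n + 1) / 3 + 1 by omega, show (n + 3) / 3 = n / 3 + 1 by omega]

lemma turanPartProd_add_three_ge (n E : ℕ) (hE : 3 * E ≤ n ^ 2) :
    turanPartProd n + 1 + n + E ≤ turanPartProd (n + 3) := by
  obtain ⟨a, b, c, h, h₃, rfl, habc⟩ := exists_turanPartProd_eq n
  rw [h, h₃]
  rcases habc with ⟨rfl, rfl⟩ | ⟨rfl, rfl⟩ | ⟨rfl, rfl⟩ <;> nlinarith

lemma turanPartProd_bounds (n : ℕ) :
    27 * turanPartProd n ≤ n ^ 3 ∧ n ^ 3 ≤ 27 * turanPartProd n + 3 * n + 2 := by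
  obtain ⟨a, b, c, h, -, rfl, habc⟩ := exists_turanPartProd_eq n
  rw [h]
  rcases habc with ⟨rfl, rfl⟩ | ⟨rfl, rfl⟩ | ⟨rfl, rfl⟩ <;> constructor <;> ring_nf <;> omega

lemma turanPartProd_add_ge {n q E : ℕ} (hq : 3 ≤ q) (hE : 2 * q * E ≤ (q - 1) * n ^ 2) :
    turanPartProd n + 1 + n + E ≤ turanPartProd (n + q) := by
  obtain rfl | hq4 := hq.eq_or_lt
  · exact turanPartProd_add_three_ge n E (by omega)
  -- `q = 3` is tight, but for `q ≥ 4` the cubic bounds leave enough room.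
  obtain ⟨p, rfl⟩ : ∃ p, q = p + 4 := ⟨q - 4, by omega⟩
  obtain ⟨h₁, -⟩ := turanPartProd_bounds n
  obtain ⟨-, h₂⟩ := turanPartProd_bounds (n + (p + 4))
  rw [show p + 4 - 1 = p + 3 by omega] at hE
  have h₁' := Nat.mul_le_mul_left (2 * (p + 4)) h₁
  have h₂' := Nat.mul_le_mul_left (2 * (p + 4)) h₂
  refine Nat.le_of_mul_le_mul_left (c := 54 * (p + 4)) ?_ (by omega)
  ring_nf at hE h₁' h₂' ⊢
  nlinarith [Nat.zero_le (p * n ^ 2), Nat.zero_le (p ^ 2 * n), Nat.zero_le (p * n),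
    Nat.zero_le (p ^ 3 * n), Nat.zero_le (p ^ 4), Nat.zero_le (p ^ 3), Nat.zero_le (p ^ 2)]

def turanPart (n i : ℕ) : Finset (Fin n) := {v | (v : ℕ) % 3 = i}

lemma card_turanPart (n i : ℕ) (hi : i < 3) : #(turanPart n i) = (n + 2 - i) / 3 := by
  have h := Nat.count_modEq_card (b := n) three_pos i
  rw [Nat.count_eq_card_filter_range, ← Nat.Iio_eq_range, ← Fin.map_valEmbedding_univ,
    filter_map, card_map] at h
  simp only [Nat.ModEq, Nat.mod_eq_of_lt hi, Function.comp_def, Fin.valEmbedding_apply] at h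
  rw [turanPart]
  split_ifs at h <;> omega

lemma isNClique_three_of_mem_turanPart {n : ℕ} {p : Fin n × Fin n × Fin n}
    (hp : p ∈ turanPart n 0 ×ˢ turanPart n 1 ×ˢ turanPart n 2) :
    (turanGraph n 3).IsNClique 3 {p.1, p.2.1, p.2.2} := by
  simp only [mem_product, turanPart, mem_filter, mem_univ, true_and] at hp
  simp only [is3Clique_triple_iff, turanGraph_adj]
  omega

lemma k3Turan_eq_card_product (n : ℕ) :
    k3Turan n = #(turanPart n 0 ×ˢ turanPart n 1 ×ˢ turanPart n 2) := by
  refine (card_bij (fun p _ ↦ {p.1, p.2.1, p.2.2})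
    (fun p hp ↦ mem_cliqueFinset_iff.2 (isNClique_three_of_mem_turanPart hp)) ?_ ?_).symm
  · rintro ⟨x, y, z⟩ hp ⟨x', y', z'⟩ hp' heq
    simp only [mem_product, turanPart, mem_filter, mem_univ, true_and] at hp hp'
    have mem : ∀ v ∈ ({x, y, z} : Finset (Fin n)), v = x' ∨ v = y' ∨ v = z' := by
      intro v hv
      simpa [heq] using hv
    simp only [Prod.mk.injEq]
    refine ⟨?_, ?_, ?_⟩
    · rcases mem x (by simp) with h | h | h <;> subst h <;> first | rfl | omega
    · rcases mem y (by simp) with h | h | h <;> subst h <;> first | rfl | omega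
    · rcases mem z (by simp) with h | h | h <;> subst h <;> first | rfl | omega
  · intro T hT
    rw [mem_cliqueFinset_iff] at hT
    have hres : ∀ i < 3, ∃ v ∈ T, (v : ℕ) % 3 = i := by
      obtain ⟨a, b, c, hab, hac, hbc, rfl⟩ := is3Clique_iff.1 hT
      simp only [turanGraph_adj] at hab hac hbc
      intro i hi
      simp only [mem_insert, mem_singleton, exists_eq_or_imp, exists_eq_left]
      omega
    choose f hfT hf using hres
    have hmem : (f 0 (by norm_num), f 1 (by norm_num), f 2 (by norm_num)) ∈
        turanPart n 0 ×ˢ turanPart n 1 ×ˢ turanPart n 2 := by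
      simp [turanPart, hf]
    refine ⟨_, hmem, eq_of_subset_of_card_le (by simp [insert_subset_iff, hfT]) ?_⟩
    rw [hT.card_eq, (isNClique_three_of_mem_turanPart hmem).card_eq]

lemma k3Turan_eq_turanPartProd (n : ℕ) : k3Turan n = turanPartProd n := by
  rw [k3Turan_eq_card_product, card_product, card_product, card_turanPart n 0 (by norm_num),
    card_turanPart n 1 (by norm_num), card_turanPart n 2 (by norm_num), turanPartProd,
    Nat.sub_zero, show n + 2 - 1 = n + 1 by omega, Nat.add_sub_cancel, mul_assoc]

namespace SimpleGraph

variable {V : Type*} (G : SimpleGraph V)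

def IsTriangleCliqueCoverOn (U : Finset V) (𝒞 : Finset (Finset V)) : Prop :=
  (∀ K ∈ 𝒞, G.IsClique (K : Set V)) ∧ ∀ T ⊆ U, G.IsNClique 3 T → ∃ K ∈ 𝒞, T ⊆ K

variable [DecidableEq V] [DecidableRel G.Adj]

def extendByCommonNeighbors (Q P : Finset V) : Finset V :=
  P ∪ {y ∈ Q | ∀ x ∈ P, G.Adj x y}

def smallCliques (W : Finset V) : Finset (Finset V) :=
  {P ∈ W.powerset | #P ≤ 2 ∧ G.IsClique (P : Set V)}

variable {G}

lemma mem_smallCliques {W P : Finset V} :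
    P ∈ G.smallCliques W ↔ P ⊆ W ∧ #P ≤ 2 ∧ G.IsClique (P : Set V) := by
  rw [smallCliques, mem_filter, mem_powerset]

lemma IsClique.extendByCommonNeighbors {P Q : Finset V} (hP : G.IsClique (P : Set V))
    (hQ : G.IsClique (Q : Set V)) : G.IsClique (G.extendByCommonNeighbors Q P : Set V) := by
  intro a ha b hb hab
  simp only [SimpleGraph.extendByCommonNeighbors, coe_union, coe_filter, Set.mem_union,
    mem_coe] at ha hb
  rcases ha with ha | ⟨haQ, haP⟩ <;> rcases hb with hb | ⟨hbQ, hbP⟩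
  · exact hP ha hb hab
  · exact hbP a ha
  · exact (haP b hb).symm
  · exact hQ haQ hbQ hab

lemma IsClique.subset_extendByCommonNeighbors_sdiff {T : Finset V} (hT : G.IsClique (T : Set V))
    (Q : Finset V) : T ⊆ G.extendByCommonNeighbors Q (T \ Q) := by
  intro t ht
  by_cases htQ : t ∈ Q
  · refine mem_union_right _ (mem_filter.2 ⟨htQ, fun x hx ↦ ?_⟩)
    obtain ⟨hxT, hxQ⟩ := mem_sdiff.1 hx
    exact hT hxT ht (ne_of_mem_of_not_mem htQ hxQ).symm
  · exact mem_union_left _ (mem_sdiff.2 ⟨ht, htQ⟩)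

lemma IsTriangleCliqueCoverOn.union_image_extendByCommonNeighbors {U Q : Finset V}
    {𝒞 : Finset (Finset V)} (hQ : G.IsClique (Q : Set V))
    (h𝒞 : G.IsTriangleCliqueCoverOn (U \ Q) 𝒞) :
    G.IsTriangleCliqueCoverOn U (𝒞 ∪ (G.smallCliques (U \ Q)).image (G.extendByCommonNeighbors Q)) := by
  refine ⟨fun K hK ↦ ?_, fun T hTU hT ↦ ?_⟩
  · rcases mem_union.1 hK with hK | hK
    · exact h𝒞.1 K hK
    · obtain ⟨P, hP, rfl⟩ := mem_image.1 hK
      exact (mem_smallCliques.1 hP).2.2.extendByCommonNeighbors hQ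
  by_cases hTQ : T ⊆ U \ Q
  · obtain ⟨K, hK, hTK⟩ := h𝒞.2 T hTQ hT
    exact ⟨K, mem_union_left _ hK, hTK⟩
  have hcard : #(T \ Q) ≤ 2 := by
    obtain ⟨t, htT, htQ⟩ : ∃ t ∈ T, t ∈ Q := by
      by_contra! h
      exact hTQ fun t ht ↦ mem_sdiff.2 ⟨hTU ht, h t ht⟩
    have hpos : 0 < #(T ∩ Q) := card_pos.2 ⟨t, mem_inter.2 ⟨htT, htQ⟩⟩
    have := card_sdiff_add_card_inter T Q
    have := hT.card_eq
    omega
  refine ⟨_, mem_union_right _ (mem_image_of_mem _ (mem_smallCliques.2 ⟨?_, hcard, ?_⟩)),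
    hT.isClique.subset_extendByCommonNeighbors_sdiff Q⟩
  · exact sdiff_subset_sdiff hTU subset_rfl
  · exact hT.isClique.subset (coe_subset.2 sdiff_subset)

variable [Fintype V]

lemma card_smallCliques_le (W : Finset V) :
    #(G.smallCliques W) ≤ 1 + #W + #(G.edgeFinset ∩ W.sym2) := by
  calc _ ≤ #({∅} ∪ W.image singleton ∪ (G.edgeFinset ∩ W.sym2).image Sym2.toFinset) := by
        refine card_le_card fun P hP ↦ ?_
        obtain ⟨hPW, hP2, hP⟩ := mem_smallCliques.1 hP
        simp only [mem_union, mem_singleton, mem_image]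
        interval_cases h : #P
        · exact .inl (.inl (card_eq_zero.1 h))
        · obtain ⟨a, rfl⟩ := card_eq_one.1 h
          exact .inl (.inr ⟨a, singleton_subset_iff.1 hPW, rfl⟩)
        · obtain ⟨a, b, hab, rfl⟩ := card_eq_two.1 h
          refine .inr ⟨s(a, b), ?_, Sym2.toFinset_mk_eq⟩
          rw [mem_inter, mem_edgeFinset, mem_edgeSet, mk_mem_sym2_iff]
          exact ⟨hP (by simp) (by simp) hab, hPW (by simp), hPW (by simp)⟩
    _ ≤ 1 + #W + #(G.edgeFinset ∩ W.sym2) := by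
        grw [card_union_le, card_union_le, card_image_le, card_image_le, card_singleton]

lemma two_mul_mul_card_edgeFinset_inter_sym2_le {W : Finset V} {r : ℕ}
    (h : ∀ K ⊆ W, G.IsClique (K : Set V) → #K ≤ r) :
    2 * r * #(G.edgeFinset ∩ W.sym2) ≤ (r - 1) * #W ^ 2 := by
  have hfree : (G.induce (W : Set V)).CliqueFree (r + 1) := by
    intro K hK
    have := h (K.map (Function.Embedding.subtype _)) (by simp +contextual [subset_iff]) (by
      rw [coe_map]
      rintro _ ⟨a, ha, rfl⟩ _ ⟨b, hb, rfl⟩ hab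
      exact hK.isClique ha hb (Subtype.coe_ne_coe.1 hab))
    rw [card_map, hK.card_eq] at this
    omega
  calc 2 * r * #(G.edgeFinset ∩ W.sym2)
      = 2 * r * #(G.induce (W : Set V)).edgeFinset := by
        have hmap : (G.induce (W : Set V)).edgeFinset.map
            (Function.Embedding.subtype (· ∈ (W : Set V))).sym2Map = G.edgeFinset ∩ W.sym2 := by
          convert map_edgeFinset_induce (G := G) (s := (W : Set V))
          simp
        rw [← hmap, card_map]
    _ ≤ 2 * r * #(turanGraph #W r).edgeFinset := by
        rw [card_edgeFinset_turanGraph]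
        gcongr
        simpa only [coe_sort_coe, Fintype.card_coe] using hfree.card_edgeFinset_le
    _ ≤ (r - 1) * #W ^ 2 := mul_card_edgeFinset_turanGraph_le

lemma exists_isTriangleCliqueCoverOn_card_le (U : Finset V) :
    ∃ 𝒞, G.IsTriangleCliqueCoverOn U 𝒞 ∧ #𝒞 ≤ turanPartProd #U := by
  induction U using Finset.strongInduction with | H U ih =>
  by_cases htri : ∀ T ⊆ U, ¬ G.IsNClique 3 T
  · exact ⟨∅, ⟨by simp, fun T hTU hT ↦ (htri T hTU hT).elim⟩, by simp⟩
  obtain ⟨T₀, hT₀U, hT₀⟩ : ∃ T ⊆ U, G.IsNClique 3 T := by simpa using htri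
  obtain ⟨Q, hQ, hQmax⟩ :=
    exists_max_image (U.powerset.filter fun K : Finset V ↦ G.IsClique (K : Set V)) card ⟨∅, by simp⟩
  simp only [mem_filter, mem_powerset, and_imp] at hQ hQmax
  have hq : 3 ≤ #Q := hT₀.card_eq ▸ hQmax T₀ hT₀U hT₀.isClique
  obtain ⟨𝒞, h𝒞, h𝒞card⟩ :=
    ih (U \ Q) (sdiff_ssubset hQ.1 (card_pos.1 (by omega)))
  refine ⟨_, h𝒞.union_image_extendByCommonNeighbors hQ.2, ?_⟩
  have hedges := two_mul_mul_card_edgeFinset_inter_sym2_le (G := G) (W := U \ Q)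
    fun K hK ↦ hQmax K (hK.trans sdiff_subset)
  calc _ ≤ #𝒞 + #(G.smallCliques (U \ Q)) :=
        (card_union_le _ _).trans (Nat.add_le_add_left card_image_le _)
    _ ≤ turanPartProd #(U \ Q) + (1 + #(U \ Q) + #(G.edgeFinset ∩ (U \ Q).sym2)) :=
        Nat.add_le_add h𝒞card (card_smallCliques_le _)
    _ ≤ turanPartProd (#(U \ Q) + #Q) := by
        have := turanPartProd_add_ge hq hedges
        omega
    _ = turanPartProd #U := by rw [card_sdiff_add_card_eq_card hQ.1]

end SimpleGraph

/-- For every graph `G` on `n` vertices, `θ_△(G) ≤ k₃(T(n,3))`. -/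
theorem triangleCliqueCoverNumber_le {V : Type*} [Fintype V] (G : SimpleGraph V) :
    triangleCliqueCoverNumber G ≤ k3Turan (Fintype.card V) := by
  classical
  obtain ⟨𝒞, h𝒞, h𝒞card⟩ := G.exists_isTriangleCliqueCoverOn_card_le univ
  calc triangleCliqueCoverNumber G ≤ #𝒞 :=
        Nat.sInf_le ⟨𝒞, ⟨h𝒞.1, fun T hT ↦ h𝒞.2 T (subset_univ T) hT⟩, rfl⟩
    _ ≤ turanPartProd (Fintype.card V) := h𝒞card
    _ = k3Turan (Fintype.card V) := (k3Turan_eq_turanPartProd _).symm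
end

section
/- Let t ≥ 2, let G be a graph on n vertices, let e be the number of t-cliques of G, let s = 1 + e, and let G' be the graph obtained from G by adding s new pairwise nonadjacent vertices u_1, …, u_s, each adjacent to all vertices of G. Then for every integer k ≥ 1, θ_{K_{t−1}}(G) ≤ k if and only if θ_{K_t}(G') ≤ s·k + e. -/
/-!
Each member `C` of a `K_{t-1}` cover of `G` gives the `s` cliques `C ∪ {u_i}` of `G'`; together
with the `e` many `t`-cliques of `G` they cover every `t`-clique of `G'`, so
`θ_{K_t}(G') ≤ s·θ_{K_{t-1}}(G) + e`. Conversely, the new vertices are pairwise nonadjacent, so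
a clique of `G'` contains at most one of them, and in a `K_t` cover of `G'` some `u_i` lies in
at most a `1/s` fraction of the members. Their traces on `G` cover the `(t-1)`-cliques `C` of
`G`, because `C ∪ {u_i}` is a `t`-clique of `G'`; hence `s·θ_{K_{t-1}}(G) ≤ θ_{K_t}(G')`.
Since `e < s`, the two bounds give the equivalence.
-/

/-- A set of cliques `𝒞` is a `K_t` clique cover of `G` if every member of `𝒞` is a
clique of `G` and every `t`-clique of `G` is contained in some member of `𝒞`. -/
def IsKtCliqueCover {V : Type*} (G : SimpleGraph V) (t : ℕ) (𝒞 : Finset (Finset V)) :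
    Prop :=
  (∀ K ∈ 𝒞, G.IsClique (K : Set V)) ∧ ∀ k : Finset V, G.IsNClique t k → ∃ K ∈ 𝒞, k ⊆ K

/-- The `K_t` clique cover number `θ_{K_t}(G)`. -/
noncomputable def ktCliqueCoverNumber {V : Type*} (G : SimpleGraph V) (t : ℕ) : ℕ :=
  sInf {m : ℕ | ∃ 𝒞 : Finset (Finset V), IsKtCliqueCover G t 𝒞 ∧ 𝒞.card = m}

/-- The graph `G'` obtained from `G` by adding `s` new pairwise nonadjacent vertices,
each adjacent to all vertices of `G`. -/
def joinIndepVerts {V : Type*} (G : SimpleGraph V) (s : ℕ) : SimpleGraph (V ⊕ Fin s) where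
  Adj x y :=
    match x, y with
    | Sum.inl a, Sum.inl b => G.Adj a b
    | Sum.inl _, Sum.inr _ => True
    | Sum.inr _, Sum.inl _ => True
    | Sum.inr _, Sum.inr _ => False
  symm := by
    constructor
    rintro (a | a) (b | b) h
    · exact h.symm
    · trivial
    · trivial
    · exact h
  loopless := by
    constructor
    rintro (a | a) h
    · exact G.loopless.irrefl a h
    · exact h

open Finset

section CoverNumber

variable {V : Type*} {G : SimpleGraph V} {t : ℕ} {𝒞 : Finset (Finset V)}

lemma ktCliqueCoverNumber_le_card (h : IsKtCliqueCover G t 𝒞) : ktCliqueCoverNumber G t ≤ #𝒞 :=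
  Nat.sInf_le ⟨𝒞, h, rfl⟩

variable (G t) in
lemma exists_isKtCliqueCover_card_eq [Finite V] :
    ∃ 𝒞 : Finset (Finset V), IsKtCliqueCover G t 𝒞 ∧ #𝒞 = ktCliqueCoverNumber G t := by
  have hcliques := Set.toFinite {K : Finset V | G.IsNClique t K}
  exact Nat.sInf_mem (s := {m | ∃ 𝒞 : Finset (Finset V), IsKtCliqueCover G t 𝒞 ∧ #𝒞 = m})
    ⟨_, hcliques.toFinset, ⟨fun K hK => (hcliques.mem_toFinset.1 hK).isClique,
    fun K hK => ⟨K, hcliques.mem_toFinset.2 hK, subset_rfl⟩⟩, rfl⟩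

end CoverNumber

section Join

variable {V : Type*} (G : SimpleGraph V) (s : ℕ)

lemma isClique_joinIndepVerts_iff {u : Set (V ⊕ Fin s)} :
    (joinIndepVerts G s).IsClique u ↔
      G.IsClique (Sum.inl ⁻¹' u) ∧ (Sum.inr ⁻¹' u).Subsingleton := by
  refine ⟨fun hu => ⟨fun a ha b hb hab => hu ha hb (Sum.inl_injective.ne hab),
    fun i hi j hj => by_contra fun hij => hu hi hj (Sum.inr_injective.ne hij)⟩, ?_⟩
  rintro ⟨hleft, hright⟩ (a | i) hx (b | j) hy hxy
  · exact hleft hx hy (fun hab => hxy (congrArg _ hab))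
  · trivial
  · trivial
  · exact hxy (congrArg _ (hright hx hy))

lemma isClique_joinIndepVerts_coe_iff {u : Finset (V ⊕ Fin s)} :
    (joinIndepVerts G s).IsClique (u : Set (V ⊕ Fin s)) ↔
      G.IsClique (u.toLeft : Set V) ∧ #u.toRight ≤ 1 := by
  have hleft : (u.toLeft : Set V) = Sum.inl ⁻¹' (u : Set (V ⊕ Fin s)) := by ext; simp
  have hright : (u.toRight : Set (Fin s)) = Sum.inr ⁻¹' (u : Set (V ⊕ Fin s)) := by ext; simp
  rw [isClique_joinIndepVerts_iff, card_le_one_iff_subsingleton, hleft, hright]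

lemma isClique_joinIndepVerts_disjSum_iff {A : Finset V} {B : Finset (Fin s)} :
    (joinIndepVerts G s).IsClique (A.disjSum B : Set (V ⊕ Fin s)) ↔
      G.IsClique (A : Set V) ∧ #B ≤ 1 := by
  rw [isClique_joinIndepVerts_coe_iff, toLeft_disjSum, toRight_disjSum]

variable {G s} [DecidableEq V]

lemma sum_card_filter_inr_mem_le {𝒟 : Finset (Finset (V ⊕ Fin s))}
    (h𝒟 : ∀ K ∈ 𝒟, (joinIndepVerts G s).IsClique (K : Set (V ⊕ Fin s))) :
    ∑ i, #{K ∈ 𝒟 | Sum.inr i ∈ K} ≤ #𝒟 := by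
  have hdisj : ((univ : Finset (Fin s)) : Set (Fin s)).PairwiseDisjoint
      (fun i => {K ∈ 𝒟 | Sum.inr i ∈ K}) := by
    intro i _ j _ hij
    refine disjoint_left.2 fun K hKi hKj => hij ?_
    rw [mem_filter] at hKi hKj
    exact card_le_one.1 ((isClique_joinIndepVerts_coe_iff G s).1 (h𝒟 K hKi.1)).2
      i (mem_toRight.2 hKi.2) j (mem_toRight.2 hKj.2)
  rw [← card_biUnion hdisj]
  exact card_le_card (biUnion_subset.2 fun i _ => filter_subset _ _)

lemma isKtCliqueCover_joinIndepVerts_of_pred [Fintype V] [DecidableRel G.Adj] {t : ℕ}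
    {𝒞 : Finset (Finset V)} (h : IsKtCliqueCover G (t - 1) 𝒞) :
    IsKtCliqueCover (joinIndepVerts G s) t
      ((𝒞 ×ˢ univ).image (fun p : Finset V × Fin s => p.1.disjSum {p.2}) ∪
        (G.cliqueFinset t).image (·.disjSum ∅)) := by
  refine ⟨?_, fun c hc => ?_⟩
  · simp only [mem_union, mem_image, mem_product, SimpleGraph.mem_cliqueFinset_iff]
    rintro _ (⟨⟨C, i⟩, ⟨hC, -⟩, rfl⟩ | ⟨K, hK, rfl⟩)
    · exact (isClique_joinIndepVerts_disjSum_iff G s).2 ⟨h.1 C hC, by simp⟩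
    · exact (isClique_joinIndepVerts_disjSum_iff G s).2 ⟨hK.isClique, by simp⟩
  obtain ⟨hleft, hright⟩ := (isClique_joinIndepVerts_coe_iff G s).1 hc.isClique
  have hcard : #c.toLeft + #c.toRight = t := card_toLeft_add_card_toRight.trans hc.card_eq
  rcases Nat.le_one_iff_eq_zero_or_eq_one.1 hright with hnone | hone
  · refine ⟨c.toLeft.disjSum ∅, mem_union_right _ (mem_image_of_mem _ ?_), ?_⟩
    · exact SimpleGraph.mem_cliqueFinset_iff.2 ⟨hleft, by omega⟩
    · rw [← card_eq_zero.1 hnone, toLeft_disjSum_toRight]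
  · obtain ⟨i, hi⟩ := card_eq_one.1 hone
    obtain ⟨C, hC, hsub⟩ := h.2 c.toLeft ⟨hleft, by omega⟩
    refine ⟨C.disjSum {i}, mem_union_left _ (mem_image_of_mem _ (mk_mem_product hC
      (mem_univ i))), subset_disjSum.2 ⟨hsub, hi.le⟩⟩

lemma isKtCliqueCover_toLeft_of_joinIndepVerts {t : ℕ} (ht : 1 ≤ t)
    {𝒟 : Finset (Finset (V ⊕ Fin s))} (h : IsKtCliqueCover (joinIndepVerts G s) t 𝒟)
    (i : Fin s) : IsKtCliqueCover G (t - 1) ({K ∈ 𝒟 | Sum.inr i ∈ K}.image toLeft) := by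
  refine ⟨?_, fun C hC => ?_⟩
  · simp only [mem_image, mem_filter]
    rintro _ ⟨K, ⟨hK, -⟩, rfl⟩
    exact ((isClique_joinIndepVerts_coe_iff G s).1 (h.1 K hK)).1
  have hCi : (joinIndepVerts G s).IsNClique t (C.disjSum {i}) := by
    refine ⟨(isClique_joinIndepVerts_disjSum_iff G s).2 ⟨hC.isClique, by simp⟩, ?_⟩
    rw [card_disjSum, hC.card_eq, card_singleton]
    omega
  obtain ⟨K, hK, hsub⟩ := h.2 _ hCi
  rw [disjSum_subset] at hsub
  have hiK : Sum.inr i ∈ K := mem_toRight.1 (hsub.2 (mem_singleton_self i))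
  exact ⟨K.toLeft, mem_image_of_mem _ (mem_filter.2 ⟨hK, hiK⟩), hsub.1⟩

variable (G s)

lemma ktCliqueCoverNumber_joinIndepVerts_le [Fintype V] [DecidableRel G.Adj] (t : ℕ) :
    ktCliqueCoverNumber (joinIndepVerts G s) t ≤
      s * ktCliqueCoverNumber G (t - 1) + #(G.cliqueFinset t) := by
  obtain ⟨𝒞, h𝒞, hcard⟩ := exists_isKtCliqueCover_card_eq G (t - 1)
  calc ktCliqueCoverNumber (joinIndepVerts G s) t
      ≤ #((𝒞 ×ˢ univ).image (fun p : Finset V × Fin s => p.1.disjSum {p.2}) ∪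
          (G.cliqueFinset t).image (·.disjSum ∅)) :=
        ktCliqueCoverNumber_le_card (isKtCliqueCover_joinIndepVerts_of_pred h𝒞)
    _ ≤ #(𝒞 ×ˢ (univ : Finset (Fin s))) + #(G.cliqueFinset t) :=
        (card_union_le _ _).trans (add_le_add card_image_le card_image_le)
    _ = s * ktCliqueCoverNumber G (t - 1) + #(G.cliqueFinset t) := by
        rw [card_product, card_univ, Fintype.card_fin, hcard, mul_comm]

lemma mul_ktCliqueCoverNumber_le_joinIndepVerts [Finite V] {t : ℕ} (ht : 1 ≤ t) :
    s * ktCliqueCoverNumber G (t - 1) ≤ ktCliqueCoverNumber (joinIndepVerts G s) t := by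
  obtain ⟨𝒟, h𝒟, hcard⟩ := exists_isKtCliqueCover_card_eq (joinIndepVerts G s) t
  rcases Nat.eq_zero_or_pos s with rfl | hs
  · simp
  obtain ⟨i, -, hi⟩ : ∃ i ∈ (univ : Finset (Fin s)), s * #{K ∈ 𝒟 | Sum.inr i ∈ K} ≤ #𝒟 := by
    refine exists_le_of_sum_le (univ_nonempty_iff.2 ⟨⟨0, hs⟩⟩) ?_
    rw [← mul_sum, sum_const, card_univ, Fintype.card_fin, smul_eq_mul]
    exact Nat.mul_le_mul_left s (sum_card_filter_inr_mem_le h𝒟.1)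
  calc s * ktCliqueCoverNumber G (t - 1)
      ≤ s * #({K ∈ 𝒟 | Sum.inr i ∈ K}.image toLeft) :=
        Nat.mul_le_mul_left s (ktCliqueCoverNumber_le_card
          (isKtCliqueCover_toLeft_of_joinIndepVerts ht h𝒟 i))
    _ ≤ ktCliqueCoverNumber (joinIndepVerts G s) t :=
        hcard ▸ (Nat.mul_le_mul_left s card_image_le).trans hi

end Join

theorem ktCliqueCoverNumber_join_iff_general {V : Type*} [Fintype V] [DecidableEq V]
    (G : SimpleGraph V) [DecidableRel G.Adj] (t : ℕ) (ht : 2 ≤ t) (e s : ℕ)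
    (he : e = (G.cliqueFinset t).card) (hs : s = 1 + e) (k : ℕ) :
    ktCliqueCoverNumber G (t - 1) ≤ k ↔
      ktCliqueCoverNumber (joinIndepVerts G s) t ≤ s * k + e := by
  constructor
  · intro h
    calc ktCliqueCoverNumber (joinIndepVerts G s) t
        ≤ s * ktCliqueCoverNumber G (t - 1) + e :=
          he ▸ ktCliqueCoverNumber_joinIndepVerts_le G s t
      _ ≤ s * k + e := by gcongr
  · intro h
    have hlt : s * ktCliqueCoverNumber G (t - 1) < s * (k + 1) :=
      calc s * ktCliqueCoverNumber G (t - 1)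
          ≤ ktCliqueCoverNumber (joinIndepVerts G s) t :=
            mul_ktCliqueCoverNumber_le_joinIndepVerts G s (by omega)
        _ ≤ s * k + e := h
        _ < s * (k + 1) := by rw [mul_add_one]; omega
    exact Nat.lt_succ_iff.1 (Nat.lt_of_mul_lt_mul_left hlt)

/-- Let `t ≥ 2`, let `G` be a graph, let `e` be the number of `t`-cliques of `G`, let
`s = 1 + e`, and let `G'` be obtained from `G` by adding `s` new pairwise nonadjacent
vertices each adjacent to all of `G`. Then for every `k ≥ 1`,
`θ_{K_{t−1}}(G) ≤ k` if and only if `θ_{K_t}(G') ≤ s·k + e`. -/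
theorem ktCliqueCoverNumber_join_iff {V : Type*} [Fintype V] [DecidableEq V]
    (G : SimpleGraph V) [DecidableRel G.Adj] (t : ℕ) (ht : 2 ≤ t) (e s : ℕ)
    (he : e = (G.cliqueFinset t).card) (hs : s = 1 + e) (k : ℕ) (hk : 1 ≤ k) :
    ktCliqueCoverNumber G (t - 1) ≤ k ↔
      ktCliqueCoverNumber (joinIndepVerts G s) t ≤ s * k + e :=
  ktCliqueCoverNumber_join_iff_general G t ht e s he hs k
end

section
/- (Erdős–Goodman–Pósa) For every graph G on n vertices, the edge clique cover number satisfies θ_e(G) ≤ ⌊n²/4⌋, with equality if and only if G is isomorphic to the Turán graph T(n,2), the complete bipartite graph K_{⌊n/2⌋,⌈n/2⌉}. -/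
/-!
Deleting both ends of an edge `uv`, a cover of the remaining graph extends to `G` by adding, for
each of the other `n - 2` vertices `x`, the clique formed by `x` and its neighbours among `u, v`,
and finally the edge `uv` itself. As `(n - 2)² / 4 + (n - 2) + 1 = n² / 4`, induction gives
`θ_e(G) ≤ n² / 4`. If `uv` lies in a triangle `uvw`, the clique of `w` already covers `uv`, so a
graph with a triangle has `θ_e(G) < n² / 4`. In a triangle-free graph a clique contains at most one
edge, so `θ_e(G) = |E(G)|`. Hence equality forces `G` to be triangle-free with `n² / 4` edges,
which by the bound is at least as many as any triangle-free graph on `n` vertices has: `G` is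
Turán-maximal, and Turán's theorem identifies it with `T(n, 2)`.
-/

open Finset SimpleGraph

section

variable {V : Type*} {G : SimpleGraph V} {𝒞 : Finset (Finset V)}

lemma IsEdgeCliqueCover.edgeCliqueCoverNumber_le (h : IsEdgeCliqueCover G 𝒞) :
    edgeCliqueCoverNumber G ≤ #𝒞 :=
  Nat.sInf_le ⟨𝒞, h, rfl⟩

lemma IsEdgeCliqueCover.exists_card_eq_edgeCliqueCoverNumber (h : IsEdgeCliqueCover G 𝒞) :
    ∃ 𝒞', IsEdgeCliqueCover G 𝒞' ∧ #𝒞' = edgeCliqueCoverNumber G :=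
  Nat.sInf_mem (s := {m | ∃ 𝒞', IsEdgeCliqueCover G 𝒞' ∧ #𝒞' = m}) ⟨_, 𝒞, h, rfl⟩

lemma isEdgeCliqueCover_of_forall_adj_ne {u v : V} (hclique : ∀ K ∈ 𝒞, G.IsClique (K : Set V))
    (hcover : ∀ a b, G.Adj a b → s(a, b) ≠ s(u, v) → ∃ K ∈ 𝒞, a ∈ K ∧ b ∈ K)
    (huv : ∃ K ∈ 𝒞, u ∈ K ∧ v ∈ K) : IsEdgeCliqueCover G 𝒞 := by
  refine ⟨hclique, fun a b hab => ?_⟩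
  by_cases he : s(a, b) = s(u, v)
  · obtain ⟨K, hK, hu, hv⟩ := huv
    rcases Sym2.eq_iff.1 he with ⟨rfl, rfl⟩ | ⟨rfl, rfl⟩
    exacts [⟨K, hK, hu, hv⟩, ⟨K, hK, hv, hu⟩]
  · exact hcover a b hab he

section Edges

variable [Fintype V] [DecidableEq V] [DecidableRel G.Adj]

lemma isEdgeCliqueCover_image_toFinset :
    IsEdgeCliqueCover G (G.edgeFinset.image Sym2.toFinset) := by
  refine ⟨?_, fun a b hab => ⟨s(a, b).toFinset, mem_image_of_mem _ (by simpa), by simp, by simp⟩⟩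
  simp only [mem_image, mem_edgeFinset, forall_exists_index, and_imp]
  rintro _ e he rfl
  induction e using Sym2.ind with
  | _ a b => simpa [Sym2.toFinset_mk_eq, isClique_pair] using fun _ => he

lemma edgeCliqueCoverNumber_le_card_edgeFinset : edgeCliqueCoverNumber G ≤ #G.edgeFinset :=
  isEdgeCliqueCover_image_toFinset.edgeCliqueCoverNumber_le.trans card_image_le

end Edges

lemma exists_isEdgeCliqueCover_card_eq [Finite V] (G : SimpleGraph V) :
    ∃ 𝒞, IsEdgeCliqueCover G 𝒞 ∧ #𝒞 = edgeCliqueCoverNumber G := by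
  classical
  have := Fintype.ofFinite V
  exact isEdgeCliqueCover_image_toFinset.exists_card_eq_edgeCliqueCoverNumber

section TriangleFree

lemma SimpleGraph.CliqueFree.mem_edge_iff_mem_clique (hG : G.CliqueFree 3) {K : Set V}
    (hK : G.IsClique K) {e : Sym2 V} (he : e ∈ G.edgeSet) (heK : ∀ x ∈ e, x ∈ K) (x : V) :
    x ∈ e ↔ x ∈ K := by
  classical
  induction e using Sym2.ind with
  | _ a b =>
  refine ⟨heK x, fun hx => ?_⟩
  by_contra! hxab
  simp only [Sym2.mem_iff, not_or] at hxab
  have ha := heK a (Sym2.mem_mk_left a b)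
  have hb := heK b (Sym2.mem_mk_right a b)
  exact hG {a, b, x} (is3Clique_triple_iff.2
    ⟨he, hK ha hx (Ne.symm hxab.1), hK hb hx (Ne.symm hxab.2)⟩)

variable [Fintype V] [DecidableRel G.Adj]

lemma IsEdgeCliqueCover.card_edgeFinset_le (hG : G.CliqueFree 3) (h : IsEdgeCliqueCover G 𝒞) :
    #G.edgeFinset ≤ #𝒞 := by
  refine card_le_card_of_forall_subsingleton (fun e K => ∀ x ∈ e, x ∈ K) (fun e he => ?_)
    (fun K hK => ?_)
  · rw [mem_edgeFinset] at he
    induction e using Sym2.ind with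
    | _ a b =>
    obtain ⟨K, hK, ha, hb⟩ := h.2 a b he
    exact ⟨K, hK, by simp [ha, hb]⟩
  · rintro e₁ ⟨he₁, h₁⟩ e₂ ⟨he₂, h₂⟩
    rw [mem_edgeFinset] at he₁ he₂
    have hK := h.1 K hK
    exact Sym2.ext fun x => (hG.mem_edge_iff_mem_clique hK he₁ h₁ x).trans
      (hG.mem_edge_iff_mem_clique hK he₂ h₂ x).symm

lemma SimpleGraph.CliqueFree.edgeCliqueCoverNumber_eq (hG : G.CliqueFree 3) :
    edgeCliqueCoverNumber G = #G.edgeFinset := by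
  obtain ⟨𝒞, h𝒞, hcard⟩ := exists_isEdgeCliqueCover_card_eq G
  exact le_antisymm (by classical exact edgeCliqueCoverNumber_le_card_edgeFinset)
    (hcard ▸ h𝒞.card_edgeFinset_le hG)

end TriangleFree

section Extension

variable [Fintype V] [DecidableEq V] (G) [DecidableRel G.Adj] (u v : V)

def extendCover (𝒟 : Finset (Finset ↥(({u, v}ᶜ : Finset V) : Set V))) : Finset (Finset V) :=
  𝒟.image (map (Function.Embedding.subtype _)) ∪
    ({u, v}ᶜ : Finset V).image fun x => insert x (({u, v} : Finset V).filter (G.Adj x))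

variable {G u v} {𝒟 : Finset (Finset ↥(({u, v}ᶜ : Finset V) : Set V))}

lemma isClique_of_mem_extendCover (huv : G.Adj u v)
    (h𝒟 : IsEdgeCliqueCover (G.induce ({u, v}ᶜ : Finset V)) 𝒟) :
    ∀ K ∈ extendCover G u v 𝒟, G.IsClique (K : Set V) := by
  simp only [extendCover, mem_union, mem_image]
  rintro _ (⟨L, hL, rfl⟩ | ⟨x, -, rfl⟩)
  · rw [coe_map]
    rintro _ ⟨a, ha, rfl⟩ _ ⟨b, hb, rfl⟩ hab
    exact h𝒟.1 L hL ha hb (ne_of_apply_ne _ hab)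
  · rw [coe_insert, isClique_insert, coe_filter]
    refine ⟨(isClique_pair.2 fun _ => huv).subset fun y hy => by simpa using hy.1, ?_⟩
    exact fun y hy _ => hy.2

lemma exists_mem_extendCover_of_adj (h𝒟 : IsEdgeCliqueCover (G.induce ({u, v}ᶜ : Finset V)) 𝒟)
    {a b : V} (hab : G.Adj a b) (hne : s(a, b) ≠ s(u, v)) :
    ∃ K ∈ extendCover G u v 𝒟, a ∈ K ∧ b ∈ K := by
  have of_mem_compl : ∀ a b, G.Adj a b → b ∈ ({u, v}ᶜ : Finset V) →
      ∃ K ∈ extendCover G u v 𝒟, a ∈ K ∧ b ∈ K := by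
    intro a b hab hb
    by_cases ha : a ∈ ({u, v}ᶜ : Finset V)
    · obtain ⟨K, hK, haK, hbK⟩ := h𝒟.2 ⟨a, ha⟩ ⟨b, hb⟩ hab
      exact ⟨K.map (Function.Embedding.subtype _), mem_union_left _ (mem_image_of_mem _ hK),
        mem_map_of_mem _ haK, mem_map_of_mem _ hbK⟩
    · refine ⟨_, mem_union_right _ (mem_image_of_mem _ hb), ?_, mem_insert_self _ _⟩
      simp only [mem_compl, not_not] at ha
      simp [ha, hab.symm]
  by_cases hb : b ∈ ({u, v}ᶜ : Finset V)
  · exact of_mem_compl a b hab hb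
  by_cases ha : a ∈ ({u, v}ᶜ : Finset V)
  · obtain ⟨K, hK, hbK, haK⟩ := of_mem_compl b a hab.symm ha
    exact ⟨K, hK, haK, hbK⟩
  simp only [mem_compl, mem_insert, mem_singleton, not_not] at ha hb
  rcases ha with rfl | rfl <;> rcases hb with h | h <;> subst h <;> simp_all [Sym2.eq_swap]

lemma card_extendCover_le (huv : u ≠ v) :
    #(extendCover G u v 𝒟) ≤ #𝒟 + (Fintype.card V - 2) := by
  refine (card_union_le _ _).trans (add_le_add card_image_le (card_image_le.trans ?_))
  rw [card_compl, card_pair huv]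

end Extension

section Step

variable [Fintype V] [DecidableEq V] {u v w : V}

lemma card_coe_compl_pair (huv : u ≠ v) :
    Fintype.card ↥(({u, v}ᶜ : Finset V) : Set V) = Fintype.card V - 2 := by
  simp only [coe_sort_coe, Fintype.card_coe, card_compl, card_pair huv]

lemma edgeCliqueCoverNumber_le_induce_add (huv : G.Adj u v) :
    edgeCliqueCoverNumber G ≤
      edgeCliqueCoverNumber (G.induce ({u, v}ᶜ : Finset V)) + (Fintype.card V - 2) + 1 := by
  classical
  obtain ⟨𝒟, h𝒟, hcard⟩ := exists_isEdgeCliqueCover_card_eq (G.induce ({u, v}ᶜ : Finset V))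
  have hcover : IsEdgeCliqueCover G (insert {u, v} (extendCover G u v 𝒟)) := by
    refine isEdgeCliqueCover_of_forall_adj_ne (u := u) (v := v) (fun K hK => ?_)
      (fun a b hab hne => ?_) ⟨{u, v}, mem_insert_self _ _, by simp, by simp⟩
    · rcases mem_insert.1 hK with rfl | hK
      · simpa using isClique_pair.2 fun _ => huv
      · exact isClique_of_mem_extendCover huv h𝒟 K hK
    · obtain ⟨K, hK, ha, hb⟩ := exists_mem_extendCover_of_adj h𝒟 hab hne
      exact ⟨K, mem_insert_of_mem hK, ha, hb⟩
  calc edgeCliqueCoverNumber G ≤ #(insert {u, v} (extendCover G u v 𝒟)) :=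
        hcover.edgeCliqueCoverNumber_le
    _ ≤ #(extendCover G u v 𝒟) + 1 := card_insert_le _ _
    _ ≤ _ := by rw [← hcard]; gcongr; exact card_extendCover_le huv.ne

lemma edgeCliqueCoverNumber_le_induce_add_of_adj_of_adj (huv : G.Adj u v) (huw : G.Adj u w)
    (hvw : G.Adj v w) :
    edgeCliqueCoverNumber G ≤
      edgeCliqueCoverNumber (G.induce ({u, v}ᶜ : Finset V)) + (Fintype.card V - 2) := by
  classical
  obtain ⟨𝒟, h𝒟, hcard⟩ := exists_isEdgeCliqueCover_card_eq (G.induce ({u, v}ᶜ : Finset V))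
  have hw : w ∈ ({u, v}ᶜ : Finset V) := by simp [huw.ne', hvw.ne']
  -- The clique of `w` in `extendCover` is the triangle `{w, u, v}`, which already covers `uv`.
  have hcover : IsEdgeCliqueCover G (extendCover G u v 𝒟) :=
    isEdgeCliqueCover_of_forall_adj_ne (isClique_of_mem_extendCover huv h𝒟)
      (fun _ _ hab hne => exists_mem_extendCover_of_adj h𝒟 hab hne)
      ⟨_, mem_union_right _ (mem_image_of_mem _ hw), by simp [huw.symm], by simp [hvw.symm]⟩
  exact hcover.edgeCliqueCoverNumber_le.trans (hcard ▸ card_extendCover_le huv.ne)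

end Step

lemma sq_div_four_eq (n : ℕ) (hn : 2 ≤ n) : n ^ 2 / 4 = (n - 2) ^ 2 / 4 + (n - 2) + 1 := by
  obtain ⟨k, rfl⟩ : ∃ k, n = k + 2 := ⟨n - 2, by omega⟩
  rw [Nat.add_sub_cancel, show (k + 2) ^ 2 = k ^ 2 + (k + 1) * 4 by ring,
    Nat.add_mul_div_right _ _ four_pos, add_assoc]

theorem edgeCliqueCoverNumber_le_card_sq_div_four [Fintype V] (G : SimpleGraph V) :
    edgeCliqueCoverNumber G ≤ Fintype.card V ^ 2 / 4 := by
  classical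
  induction hn : Fintype.card V using Nat.strong_induction_on generalizing V with
  | _ n ih =>
  rcases em (∃ u v, G.Adj u v) with ⟨u, v, huv⟩ | hE
  swap
  · have hempty : IsEdgeCliqueCover G ∅ := ⟨by simp, fun u v h => (hE ⟨u, v, h⟩).elim⟩
    exact (hempty.edgeCliqueCoverNumber_le.trans_eq card_empty).trans (Nat.zero_le _)
  have hn2 : 2 ≤ n := hn ▸ card_pair huv.ne ▸ card_le_univ _
  calc edgeCliqueCoverNumber G
      ≤ edgeCliqueCoverNumber (G.induce ({u, v}ᶜ : Finset V)) + (n - 2) + 1 :=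
        hn ▸ edgeCliqueCoverNumber_le_induce_add huv
    _ ≤ (n - 2) ^ 2 / 4 + (n - 2) + 1 := by
        gcongr; exact ih _ (by omega) _ (by rw [card_coe_compl_pair huv.ne, hn])
    _ = n ^ 2 / 4 := (sq_div_four_eq n hn2).symm

theorem edgeCliqueCoverNumber_lt_of_adj_of_adj [Fintype V] {u v w : V} (huv : G.Adj u v)
    (huw : G.Adj u w) (hvw : G.Adj v w) : edgeCliqueCoverNumber G < Fintype.card V ^ 2 / 4 := by
  classical
  have hn2 : 2 ≤ Fintype.card V := card_pair huv.ne ▸ card_le_univ _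
  calc edgeCliqueCoverNumber G
      ≤ edgeCliqueCoverNumber (G.induce ({u, v}ᶜ : Finset V)) + (Fintype.card V - 2) :=
        edgeCliqueCoverNumber_le_induce_add_of_adj_of_adj huv huw hvw
    _ ≤ (Fintype.card V - 2) ^ 2 / 4 + (Fintype.card V - 2) := by
        gcongr
        exact card_coe_compl_pair huv.ne ▸ edgeCliqueCoverNumber_le_card_sq_div_four _
    _ < Fintype.card V ^ 2 / 4 := by rw [sq_div_four_eq _ hn2]; omega

lemma card_edgeFinset_turanGraph_two (n : ℕ) : #(turanGraph n 2).edgeFinset = n ^ 2 / 4 := by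
  rw [card_edgeFinset_turanGraph, Nat.choose_eq_zero_of_lt (Nat.mod_lt n two_pos), add_zero]
  rcases Nat.even_or_odd' n with ⟨k, rfl | rfl⟩
  · simp
  · rw [show (2 * k + 1) ^ 2 = 4 * (k ^ 2 + k) + 1 by ring, Nat.mul_add_mod_self_left,
      Nat.one_mod, one_pow, Nat.add_sub_cancel, Nat.add_one_sub_one, mul_one]
    omega

end

/-- (Erdős–Goodman–Pósa) For every graph `G` on `n` vertices, `θ_e(G) ≤ ⌊n²/4⌋`, with
equality if and only if `G` is isomorphic to the Turán graph `T(n,2)`, the complete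
bipartite graph `K_{⌊n/2⌋,⌈n/2⌉}`. -/
theorem edgeCliqueCoverNumber_le_and_eq_iff {V : Type*} [Fintype V] (G : SimpleGraph V) :
    edgeCliqueCoverNumber G ≤ (Fintype.card V) ^ 2 / 4 ∧
      (edgeCliqueCoverNumber G = (Fintype.card V) ^ 2 / 4 ↔
        Nonempty (G ≃g SimpleGraph.turanGraph (Fintype.card V) 2)) := by
  classical
  refine ⟨edgeCliqueCoverNumber_le_card_sq_div_four G, fun heq => ?_, fun ⟨f⟩ => ?_⟩
  · have hG : G.CliqueFree 3 := fun t ht => by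
      obtain ⟨a, b, c, hab, hac, hbc, -⟩ := is3Clique_iff.1 ht
      exact (edgeCliqueCoverNumber_lt_of_adj_of_adj hab hac hbc).ne heq
    refine (isTuranMaximal_iff_nonempty_iso_turanGraph two_pos).1 ⟨hG, fun H _ hH => ?_⟩
    rw [← hG.edgeCliqueCoverNumber_eq, heq, ← hH.edgeCliqueCoverNumber_eq]
    exact edgeCliqueCoverNumber_le_card_sq_div_four H
  · have hG : G.CliqueFree 3 := (isTuranMaximal_of_iso f two_pos).1
    rw [hG.edgeCliqueCoverNumber_eq, f.card_edgeFinset_eq, card_edgeFinset_turanGraph_two]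
end

section
/- (Lovász) Let G be a graph on n vertices, let k = C(n,2) − |E(G)| be the number of non-edges of G, and let t be the greatest integer such that t² − t ≤ k. Then the edge clique cover number satisfies θ_e(G) ≤ k + t. -/
open Finset

theorem Finset.sum_range_card_le_sum_nat (s : Finset ℕ) : ∑ i ∈ range #s, i ≤ ∑ x ∈ s, x := by
  have h := Finset.sum_range_le_sum (s := s.map Nat.castEmbedding) (c := 0) (by simp)
  simp only [card_map, zero_add, sum_map, Nat.castEmbedding_apply] at h
  rw [← Nat.cast_sum, ← Nat.cast_sum] at h
  exact_mod_cast h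

def repeatedColors {V : Type*} [Fintype V] (col : V → ℕ) : Finset ℕ :=
  {c ∈ univ.image col | 1 < #{v | col v = c}}

theorem card_repeatedColors_mul_pred_le_sum {V : Type*} [Fintype V] (col : V → ℕ) :
    #(repeatedColors col) * (#(repeatedColors col) - 1) ≤ ∑ v, col v := by
  set T := repeatedColors col
  calc #T * (#T - 1) = (∑ i ∈ range #T, i) * 2 := (sum_range_id_mul_two _).symm
    _ ≤ (∑ c ∈ T, c) * 2 := Nat.mul_le_mul_right 2 (sum_range_card_le_sum_nat T)
    _ = ∑ c ∈ T, 2 • c := by rw [sum_mul]; simp only [smul_eq_mul, mul_comm]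
    _ ≤ ∑ c ∈ T, #{v | col v = c} • c := sum_le_sum fun c hc => by
        gcongr; exact (mem_filter.1 hc).2
    _ ≤ ∑ c ∈ univ.image col, #{v | col v = c} • c := sum_le_sum_of_subset (filter_subset _ _)
    _ = ∑ v, col v := (sum_comp id col).symm

namespace SimpleGraph

variable {V : Type*}

structure IsGreedyColoring (H : SimpleGraph V) (col : V → ℕ) : Prop where
  ne_of_adj : ∀ ⦃u v⦄, H.Adj u v → col u ≠ col v
  exists_adj_of_lt : ∀ ⦃v c⦄, c < col v → ∃ u, H.Adj u v ∧ col u = c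

theorem exists_isGreedyColoring [Finite V] (H : SimpleGraph V) :
    ∃ col, H.IsGreedyColoring col := by
  classical
  cases nonempty_fintype V
  obtain ⟨col, hproper, hmin⟩ :=
    (InvImage.wf (fun col : V → ℕ => ∑ v, col v) wellFounded_lt).has_min
      {col | ∀ ⦃u v⦄, H.Adj u v → col u ≠ col v}
      ⟨fun v => Fintype.equivFin V v,
        fun u v huv h => H.ne_of_adj huv (by simpa [Fin.val_inj] using h)⟩
  refine ⟨col, hproper, fun v c hc => ?_⟩
  by_contra! hfree
  -- `c` is free at `v`, so recolouring `v` with `c` stays proper and lowers the colour sum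
  refine hmin (Function.update col v c) (fun x y hxy => ?_) (show ∑ x, _ < ∑ x, _ from ?_)
  · simp only [Function.update_apply]
    split_ifs with hx hy hy
    · exact absurd (hx.trans hy.symm) (H.ne_of_adj hxy)
    · exact (hfree y (hx ▸ hxy.symm)).symm
    · exact hfree x (hy ▸ hxy)
    · exact hproper hxy
  · refine sum_lt_sum (fun x _ => ?_) ⟨v, mem_univ v, ?_⟩
    · rw [Function.update_apply]
      split_ifs with hx
      · exact hx ▸ hc.le
      · exact le_rfl
    · simpa using hc

variable {H : SimpleGraph V}

theorem IsGreedyColoring.le_card_lowerNeighbors [Fintype V] [DecidableRel H.Adj] {col : V → ℕ}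
    (hcol : H.IsGreedyColoring col) (v : V) : col v ≤ #{u | H.Adj u v ∧ col u < col v} :=
  calc col v = #(range (col v)) := (card_range _).symm
    _ ≤ #(({u | H.Adj u v ∧ col u < col v} : Finset V).image col) := card_le_card fun c hc => by
        obtain ⟨u, hu, rfl⟩ := hcol.exists_adj_of_lt (mem_range.1 hc)
        exact mem_image_of_mem _ (by simpa [hu] using hc)
    _ ≤ _ := card_image_le

theorem IsGreedyColoring.sum_le_card_edgeFinset [Fintype V] [DecidableEq V] [DecidableRel H.Adj]
    {col : V → ℕ} (hcol : H.IsGreedyColoring col) : ∑ v, col v ≤ #H.edgeFinset :=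
  calc ∑ v, col v ≤ ∑ v, #{u | H.Adj u v ∧ col u < col v} :=
        sum_le_sum fun v _ => hcol.le_card_lowerNeighbors v
    _ = #(univ.sigma fun v => ({u | H.Adj u v ∧ col u < col v} : Finset V)) :=
        (card_sigma _ _).symm
    _ ≤ #H.edgeFinset := by
      refine card_le_card_of_injOn (fun p => s(p.1, p.2)) (fun p hp => ?_) fun p hp q hq hpq => ?_
      · simp only [mem_coe, mem_sigma, mem_filter, mem_univ, true_and] at hp
        simpa using hp.1.symm
      · simp only [mem_coe, mem_sigma, mem_filter, mem_univ, true_and] at hp hq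
        rcases Sym2.eq_iff.1 hpq with ⟨h1, h2⟩ | ⟨h1, h2⟩
        · exact Sigma.ext h1 (heq_of_eq h2)
        · rw [h1, h2] at hp
          omega

theorem IsGreedyColoring.isClique_colorClass {G : SimpleGraph V} {col : V → ℕ}
    (hcol : Gᶜ.IsGreedyColoring col) (c : ℕ) : G.IsClique {v | col v = c} :=
  fun _ hu _ hv huv => by_contra fun h => hcol.ne_of_adj ⟨huv, h⟩ (hu.trans hv.symm)

theorem card_edgeFinset_compl [Fintype V] [DecidableEq V] (G : SimpleGraph V)
    [DecidableRel G.Adj] :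
    #Gᶜ.edgeFinset = (Fintype.card V).choose 2 - #G.edgeFinset := by
  rw [← card_edgeFinset_top_eq_card_choose_two, ← card_sdiff_of_subset (edgeFinset_mono le_top),
    ← edgeFinset_sdiff]
  congr 1
  ext e
  rw [mem_edgeFinset, mem_edgeFinset, top_sdiff]

section Cover

variable [Fintype V] [DecidableEq V] (G : SimpleGraph V) [DecidableRel G.Adj] (col : V → ℕ)

def colorClassCover : Finset (Finset V) :=
  (repeatedColors col).image (fun c => ({v | col v = c} : Finset V)) ∪
    (univ.sigma fun v => range (col v)).image
      fun p => insert p.1 ({u | col u = p.2 ∧ G.Adj u p.1} : Finset V)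

variable {G col}

theorem isEdgeCliqueCover_colorClassCover (hcol : ∀ c, G.IsClique {v | col v = c}) :
    IsEdgeCliqueCover G (colorClassCover G col) := by
  constructor
  · intro K hK
    rcases mem_union.1 hK with hK | hK
    · obtain ⟨c, -, rfl⟩ := mem_image.1 hK
      simpa using hcol c
    · obtain ⟨⟨v, c⟩, -, rfl⟩ := mem_image.1 hK
      rw [coe_insert, isClique_insert]
      refine ⟨(hcol c).subset fun u hu => ?_, fun u hu _ => ?_⟩
      · simp_all
      · simp_all [adj_comm]
  · intro u v huv
    wlog hle : col u ≤ col v generalizing u v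
    · obtain ⟨K, hK, hv, hu⟩ := this v u huv.symm (by omega)
      exact ⟨K, hK, hu, hv⟩
    rcases hle.lt_or_eq with hlt | heq
    · refine ⟨insert v ({w | col w = col u ∧ G.Adj w v} : Finset V),
        mem_union_right _ (mem_image.2 ⟨⟨v, col u⟩, by simpa using hlt, rfl⟩), by simp [huv],
        mem_insert_self _ _⟩
    · refine ⟨({w | col w = col u} : Finset V),
        mem_union_left _ (mem_image.2 ⟨col u, ?_, rfl⟩), by simp, by simp [heq]⟩
      simp only [repeatedColors, mem_filter, mem_image_of_mem col (mem_univ u), true_and]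
      exact one_lt_card.2 ⟨u, by simp, v, by simp [heq], huv.ne⟩

theorem card_colorClassCover_le : #(colorClassCover G col) ≤ #(repeatedColors col) + ∑ v, col v :=
  calc #(colorClassCover G col)
      ≤ #((repeatedColors col).image (fun c => ({v | col v = c} : Finset V))) +
        #((univ.sigma fun v => range (col v)).image
          fun p => insert p.1 ({u | col u = p.2 ∧ G.Adj u p.1} : Finset V)) := card_union_le _ _
    _ ≤ #(repeatedColors col) + #(univ.sigma fun v => range (col v)) :=
      add_le_add card_image_le card_image_le
    _ = #(repeatedColors col) + ∑ v, col v := by simp [card_sigma]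

end Cover

end SimpleGraph

theorem edgeCliqueCoverNumber_le_lovasz_general {V : Type*} [Fintype V] [DecidableEq V]
    (G : SimpleGraph V) [DecidableRel G.Adj] (k t : ℕ)
    (hk : k = Nat.choose (Fintype.card V) 2 - G.edgeFinset.card)
    (htmax : ∀ u : ℕ, u * u - u ≤ k → u ≤ t) :
    edgeCliqueCoverNumber G ≤ k + t := by
  obtain ⟨col, hcol⟩ := Gᶜ.exists_isGreedyColoring
  have hsum : ∑ v, col v ≤ k := hk ▸ G.card_edgeFinset_compl ▸ hcol.sum_le_card_edgeFinset
  have hrep : #(repeatedColors col) ≤ t := htmax _ <| by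
    rw [← Nat.mul_sub_one]
    exact (card_repeatedColors_mul_pred_le_sum col).trans hsum
  calc edgeCliqueCoverNumber G ≤ #(G.colorClassCover col) :=
        Nat.sInf_le ⟨_, SimpleGraph.isEdgeCliqueCover_colorClassCover hcol.isClique_colorClass, rfl⟩
    _ ≤ #(repeatedColors col) + ∑ v, col v := SimpleGraph.card_colorClassCover_le
    _ ≤ k + t := by omega

/-- (Lovász) Let `G` be a graph on `n` vertices, let `k = C(n,2) − |E(G)|` be the number
of non-edges of `G`, and let `t` be the greatest integer such that `t² − t ≤ k`. Then
`θ_e(G) ≤ k + t`. -/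
theorem edgeCliqueCoverNumber_le_lovasz {V : Type*} [Fintype V] [DecidableEq V]
    (G : SimpleGraph V) [DecidableRel G.Adj] (k t : ℕ)
    (hk : k = Nat.choose (Fintype.card V) 2 - G.edgeFinset.card)
    (ht : t * t - t ≤ k) (htmax : ∀ u : ℕ, u * u - u ≤ k → u ≤ t) :
    edgeCliqueCoverNumber G ≤ k + t :=
  edgeCliqueCoverNumber_le_lovasz_general G k t hk htmax
end
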